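/- Let 0 < ε < 1/2, Q = ⌊1/ε⌋ and let γ = a/q < γ' = a'/q' be consecutive Farey fractions of order Q with q < q'. Then ∫_{arctan γ}^{arctan γ'} l_ε(ω)² dω = (q' - ε(q'² - q²))/q + O(ε²), where for tan ω ∈ [γ, (a+ε)/q] we set l_ε(ω) = distance from the origin to the point where the ray of angle ω meets the segment {q} × [a, a+ε] (extended appropriately), and for tan ω ∈ [(a+ε)/q, γ'] l_ε(ω) is the distance to the line x = q' along the ray; equivalently, 2·area(△ O A N) + 2·area(△ O N₀' A') - 2·area(△ A W₀ W) = εq + q'(a' - (a+ε)q'/q) + O(ε²) = (q' - ε(q'²-q²))/q + O(ε²), where A = (q,a), N = (q, a+ε), A' = (q', a'), N₀' is the intersection of line ON with x = q', W = (q-ε, a), W₀ the intersection of OW with x = q. -/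
import Mathlib


/-- `a/q` is a Farey fraction of order `Q`. -/
def IsFarey (Q a q : ℕ) : Prop :=
  1 ≤ a ∧ a ≤ q ∧ q ≤ Q ∧ Nat.gcd a q = 1

/-- `a/q < a'/q'` are consecutive Farey fractions of order `Q`. -/
def FareyConsec (Q a q a' q' : ℕ) : Prop :=
  IsFarey Q a q ∧ IsFarey Q a' q' ∧ (a : ℚ) / q < (a' : ℚ) / q' ∧
    ∀ b p : ℕ, IsFarey Q b p → ¬((a : ℚ) / q < (b : ℚ) / p ∧ (b : ℚ) / p < (a' : ℚ) / q')

set_option maxHeartbeats 1000000 in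
lemma farey_unimodular (Q a q a' q' : ℕ) (h : FareyConsec Q a q a' q') (hqq' : q < q') :
    (a' : ℤ) * q - a * q' = 1 := by
  obtain ⟨⟨ha1, haq, hqQ, hg⟩, ⟨ha'1, ha'q', hq'Q, hg'⟩, hlt, hmax⟩ := h
  have hq0 : 0 < q := lt_of_lt_of_le ha1 haq
  have hq'0 : 0 < q' := lt_of_lt_of_le ha'1 ha'q'
  have hqz : (0:ℚ) < (q:ℚ) := by exact_mod_cast hq0
  have hq'z : (0:ℚ) < (q':ℚ) := by exact_mod_cast hq'0
  -- d ≥ 1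
  have hd : (0:ℤ) < a' * q - a * q' := by
    rw [div_lt_div_iff₀ hqz hq'z] at hlt
    have : (a:ℤ) * q' < a' * q := by exact_mod_cast hlt
    linarith
  -- a < q
  have haltq : a < q := by
    have h1 : (a':ℚ)/q' ≤ 1 := by
      rw [div_le_one hq'z]; exact_mod_cast ha'q'
    have : (a:ℚ)/q < 1 := lt_of_lt_of_le hlt h1
    rw [div_lt_one hqz] at this
    exact_mod_cast this
  -- coprimality over ℤ
  have hco : IsCoprime (a:ℤ) (q:ℤ) := by
    rw [Int.isCoprime_iff_gcd_eq_one]; exact_mod_cast hg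
  obtain ⟨u, v, huv⟩ := hco
  set p : ℤ := (Q:ℤ) - ((Q:ℤ) + u) % q with hp_def
  have hqZ : (0:ℤ) < (q:ℤ) := by exact_mod_cast hq0
  have hmod1 : 0 ≤ ((Q:ℤ) + u) % q := Int.emod_nonneg _ (by positivity)
  have hmod2 : ((Q:ℤ) + u) % q < q := Int.emod_lt_of_pos _ hqZ
  have hpQ : p ≤ (Q:ℤ) := by simp [hp_def]; linarith
  have hpgt : (Q:ℤ) - q < p := by simp [hp_def]; linarith
  have hp1 : 1 ≤ p := by
    have : (q:ℤ) ≤ Q := by exact_mod_cast hqQ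
    omega
  -- divisibility
  have hdvd : (q:ℤ) ∣ a * p + 1 := by
    refine ⟨v + a * (((Q:ℤ) + u) / q), ?_⟩
    have he : ((Q:ℤ) + u) % q = (Q:ℤ) + u - q * (((Q:ℤ) + u) / q) := Int.emod_def _ _
    rw [hp_def, he]
    ring_nf
    nlinarith [huv]
  set b : ℤ := (a * p + 1) / q with hb_def
  have hbq : b * q = a * p + 1 := Int.ediv_mul_cancel hdvd
  clear_value b
  clear_value p
  have hb1 : 1 ≤ b := by
    have h2 : (0:ℤ) < a * p + 1 := by
      have : (1:ℤ) ≤ a := by exact_mod_cast ha1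
      nlinarith
    by_contra hc
    push_neg at hc
    nlinarith
  have hbp : b ≤ p := by
    have ha2 : (a:ℤ) + 1 ≤ q := by exact_mod_cast haltq
    nlinarith
  -- coprime b p
  have hcobp : IsCoprime b p := ⟨q, -a, by linarith [hbq]⟩
  -- b/p is Farey
  have hBP : IsFarey Q b.toNat p.toNat := by
    have hbt : (b.toNat : ℤ) = b := Int.toNat_of_nonneg (by linarith)
    have hpt : (p.toNat : ℤ) = p := Int.toNat_of_nonneg (by linarith)
    refine ⟨?_, ?_, ?_, ?_⟩
    · omega
    · omega
    · omega
    · have := Int.isCoprime_iff_gcd_eq_one.mp hcobp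
      rwa [← hbt, ← hpt, Int.gcd_natCast_natCast] at this
  have hbt : (b.toNat : ℤ) = b := Int.toNat_of_nonneg (by linarith)
  have hpt : (p.toNat : ℤ) = p := Int.toNat_of_nonneg (by linarith)
  have hnb := hmax b.toNat p.toNat hBP
  have hpz : (0:ℚ) < (p:ℚ) := by exact_mod_cast hp1
  have hfirst : (a:ℚ)/q < (b.toNat:ℚ)/(p.toNat:ℚ) := by
    have h1 : ((b.toNat:ℕ):ℚ) = (b:ℚ) := by exact_mod_cast congrArg (Int.cast : ℤ → ℚ) hbt
    have h2 : ((p.toNat:ℕ):ℚ) = (p:ℚ) := by exact_mod_cast congrArg (Int.cast : ℤ → ℚ) hpt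
    rw [h1, h2, div_lt_div_iff₀ hqz hpz]
    have : (a:ℤ) * p < b * q := by linarith
    exact_mod_cast this
  have hsecond : (a':ℚ)/q' ≤ (b.toNat:ℚ)/(p.toNat:ℚ) := by
    by_contra hc
    push_neg at hc
    exact hnb ⟨hfirst, hc⟩
  -- e ≥ 0
  have he0 : 0 ≤ b * q' - a' * p := by
    have h1 : ((b.toNat:ℕ):ℚ) = (b:ℚ) := by exact_mod_cast congrArg (Int.cast : ℤ → ℚ) hbt
    have h2 : ((p.toNat:ℕ):ℚ) = (p:ℚ) := by exact_mod_cast congrArg (Int.cast : ℤ → ℚ) hpt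
    rw [h1, h2, div_le_div_iff₀ hq'z hpz] at hsecond
    have : (a':ℤ) * p ≤ b * q' := by exact_mod_cast hsecond
    linarith
  -- key identity: q*e + p*d = q'
  have hkey : (q:ℤ) * (b * q' - a' * p) + p * (a' * q - a * q') = q' := by
    have : (q:ℤ) * (b * q' - a' * p) + p * (a' * q - a * q') = q' * (b * q - a * p) := by ring
    rw [this, hbq]; ring
  rcases eq_or_lt_of_le he0 with he | he
  · -- e = 0 : b/p = a'/q' reduced ⇒ p = q', b = a', so d = 1
    have hbe : b * q' = a' * p := by linarith
    have hco' : IsCoprime (a':ℤ) (q':ℤ) := by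
      rw [Int.isCoprime_iff_gcd_eq_one]; exact_mod_cast hg'
    have hdvd1 : p ∣ (q':ℤ) := by
      have : p ∣ b * q' := ⟨a', by linarith⟩
      exact (IsCoprime.symm hcobp).dvd_of_dvd_mul_left this
    have hdvd2 : (q':ℤ) ∣ p := by
      have : (q':ℤ) ∣ a' * p := ⟨b, by linarith⟩
      exact (IsCoprime.symm hco').dvd_of_dvd_mul_left this
    have hpq' : p = q' := by
      have hq'Z : (0:ℤ) < q' := by exact_mod_cast hq'0
      exact Int.dvd_antisymm (by linarith) (by linarith) hdvd1 hdvd2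
    have hba' : b = a' := by
      have hq'Z : ((q':ℤ)) ≠ 0 := by exact_mod_cast hq'0.ne'
      have h2 : b * q' = a' * q' := by rw [hbe, hpq']
      exact mul_right_cancel₀ hq'Z h2
    rw [← hba', ← hpq']
    linarith
  · -- e ≥ 1 : show d ≤ 1
    have he1 : 1 ≤ b * q' - a' * p := he
    by_contra hcon
    have hd2 : 2 ≤ (a':ℤ) * q - a * q' := by omega
    have hQq' : (q':ℤ) ≤ Q := by exact_mod_cast hq'Q
    have hQq : (q:ℤ) < Q := by exact_mod_cast lt_of_lt_of_le hqq' hq'Q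
    nlinarith [hkey, hpgt, he1, hd2, hqZ]


/-- Area of the triangle with vertices `P`, `Q`, `R` in the plane. -/
noncomputable def triArea (P Q R : ℝ × ℝ) : ℝ :=
  |(Q.1 - P.1) * (R.2 - P.2) - (R.1 - P.1) * (Q.2 - P.2)| / 2

set_option maxHeartbeats 1000000 in
theorem second_moment_on_farey_arc (ε : ℝ) (hε : 0 < ε) (hε' : ε < 1 / 2)
    (Q : ℕ) (hQ : Q = Nat.floor (1 / ε)) (a q a' q' : ℕ)
    (h : FareyConsec Q a q a' q') (hqq' : q < q') :
    -- the area decomposition: with O = (0,0), A = (q,a), N = (q,a+ε), A' = (q',a'),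
    -- N₀' = ON ∩ {x = q'}, W = (q-ε,a), W₀ = OW ∩ {x = q},
    2 * triArea (0, 0) ((q : ℝ), (a : ℝ)) ((q : ℝ), (a : ℝ) + ε) +
        2 * triArea (0, 0) ((q' : ℝ), ((a : ℝ) + ε) * q' / q) ((q' : ℝ), (a' : ℝ)) -
        2 * triArea ((q : ℝ), (a : ℝ)) ((q : ℝ), (a : ℝ) * q / ((q : ℝ) - ε))
          (((q : ℝ) - ε), (a : ℝ)) =
      ε * q + (q' : ℝ) * ((a' : ℝ) - ((a : ℝ) + ε) * q' / q) - (a : ℝ) * ε ^ 2 / ((q : ℝ) - ε) ∧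
    -- the algebraic identity using a'q - aq' = 1
    ε * q + (q' : ℝ) * ((a' : ℝ) - ((a : ℝ) + ε) * q' / q) =
      ((q' : ℝ) - ε * ((q' : ℝ) ^ 2 - (q : ℝ) ^ 2)) / q ∧
    -- the error term is O(ε²)
    (a : ℝ) * ε ^ 2 / ((q : ℝ) - ε) ≤ ε ^ 2 := by
  have uniZ := farey_unimodular Q a q a' q' h hqq'
  obtain ⟨⟨ha1, haq, hqQ, hg⟩, ⟨ha'1, ha'q', hq'Q, hg'⟩, hlt, hmax⟩ := h
  have hq0 : 0 < q := lt_of_lt_of_le ha1 haq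
  have hq'0 : 0 < q' := lt_of_lt_of_le ha'1 ha'q'
  have uni : (a' : ℝ) * q - (a : ℝ) * q' = 1 := by exact_mod_cast uniZ
  have hq1 : (1:ℝ) ≤ q := by exact_mod_cast hq0
  have hq'1 : (1:ℝ) ≤ q' := by exact_mod_cast hq'0
  have hqR : (0:ℝ) < q := by linarith
  have hqe : (0:ℝ) < (q:ℝ) - ε := by linarith
  have ha0 : (0:ℝ) ≤ a := by positivity
  -- a < q
  have haltq : a < q := by
    have hqz : (0:ℚ) < (q:ℚ) := by exact_mod_cast hq0
    have hq'z : (0:ℚ) < (q':ℚ) := by exact_mod_cast hq'0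
    have h1 : (a':ℚ)/q' ≤ 1 := by
      rw [div_le_one hq'z]; exact_mod_cast ha'q'
    have h2 : (a:ℚ)/q < 1 := lt_of_lt_of_le hlt h1
    rw [div_lt_one hqz] at h2
    exact_mod_cast h2
  have haqR : (a:ℝ) + 1 ≤ q := by exact_mod_cast haltq
  -- ε q' ≤ 1
  have hεq' : ε * q' ≤ 1 := by
    have h1 : (q' : ℝ) ≤ Q := by exact_mod_cast hq'Q
    have h2 : (Q : ℝ) ≤ 1 / ε := by
      rw [hQ]; exact Nat.floor_le (by positivity)
    have : (q' : ℝ) ≤ 1 / ε := le_trans h1 h2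
    rw [le_div_iff₀ hε] at this
    linarith
  refine ⟨?_, ?_, ?_⟩
  · -- area decomposition
    have T1 : triArea (0, 0) ((q : ℝ), (a : ℝ)) ((q : ℝ), (a : ℝ) + ε) = ε * q / 2 := by
      unfold triArea
      simp only
      rw [abs_of_nonneg (by nlinarith)]
      ring
    have T2 : triArea (0, 0) ((q' : ℝ), ((a : ℝ) + ε) * q' / q) ((q' : ℝ), (a' : ℝ)) =
        (q' : ℝ) * ((a' : ℝ) - ((a : ℝ) + ε) * q' / q) / 2 := by
      unfold triArea
      simp only
      have hnn : (0:ℝ) ≤ ((q':ℝ) - 0) * ((a':ℝ) - 0) - ((q':ℝ) - 0) * (((a:ℝ) + ε) * q' / q - 0) := by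
        have key : (0:ℝ) ≤ (a':ℝ) - ((a:ℝ) + ε) * q' / q := by
          rw [sub_nonneg, div_le_iff₀ hqR]
          nlinarith
        nlinarith
      rw [abs_of_nonneg hnn]
      ring
    have T3 : triArea ((q : ℝ), (a : ℝ)) ((q : ℝ), (a : ℝ) * q / ((q : ℝ) - ε))
        (((q : ℝ) - ε), (a : ℝ)) = (a : ℝ) * ε ^ 2 / ((q : ℝ) - ε) / 2 := by
      unfold triArea
      simp only
      have hnn : (0:ℝ) ≤ ((q:ℝ) - q) * ((a:ℝ) - a) - (((q:ℝ) - ε) - q) * ((a:ℝ) * q / ((q:ℝ) - ε) - a) := by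
        have key : (a:ℝ) ≤ (a:ℝ) * q / ((q:ℝ) - ε) := by
          rw [le_div_iff₀ hqe]
          nlinarith
        nlinarith
      rw [abs_of_nonneg hnn]
      field_simp
      ring
    rw [T1, T2, T3]
    ring
  · -- algebraic identity
    field_simp
    nlinarith [uni, hqR]
  · rw [div_le_iff₀ hqe]
    nlinarith
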